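/- arXiv:2504.06731 — 4 statements merged into one kernel-verified Lean document; each statement's English description precedes it below -/
import Mathlib

section
/- Let W be a row-stochastic n×n matrix, σ ∈ (0,1), β₀ ∈ (0,1), and α₁, α₂ ≥ 0 with α₁+α₂ = 1. Set Λ = σI, W̃ = α₁W + α₂I, W^(1) = (1−β₀)W, W^(2) = β₀W̃, and Ā_d = [[0, I],[σ W^(2), σ W^(1)]]. Then ρ(Ā_d) = ( σ(1−β₀) + √( σ²(1−β₀)² + 4σβ₀ ) ) / 2, which is strictly greater than σ = ρ(σW). In particular, ρ(Ā_d) does not depend on α₁, α₂, or on the choice of the stochastic matrix W. -/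
open Matrix

lemma mem_spec_iff {m : Type*} [Fintype m] [DecidableEq m]
    (M : Matrix m m ℂ) (z : ℂ) :
    z ∈ spectrum ℂ M ↔ ∃ v, v ≠ 0 ∧ M.mulVec v = z • v := by
  rw [← AlgEquiv.spectrum_eq (Matrix.toLinAlgEquiv' (R := ℂ) (n := m)) M,
      ← Module.End.hasEigenvalue_iff_mem_spectrum]
  constructor
  · intro h
    obtain ⟨v, hv, hv0⟩ := h.exists_hasEigenvector
    refine ⟨v, hv0, ?_⟩
    have := Module.End.mem_eigenspace_iff.mp hv
    simpa [Matrix.toLinAlgEquiv'_apply] using this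
  · rintro ⟨v, hv0, hv⟩
    exact Module.End.hasEigenvalue_of_hasEigenvector
      ⟨Module.End.mem_eigenspace_iff.mpr (by simpa [Matrix.toLinAlgEquiv'_apply] using hv), hv0⟩

/-- quadratic root bound, non-strict -/
lemma quad_le {a b t : ℝ} (ha : 0 < a) (hb : 0 < b) (ht : 0 ≤ t)
    (h : t^2 ≤ a*t + b) : t ≤ (a + Real.sqrt (a^2 + 4*b)) / 2 := by
  set s := Real.sqrt (a^2 + 4*b) with hs
  have hs2 : s^2 = a^2 + 4*b := Real.sq_sqrt (by nlinarith)
  have hsa : a < s := by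
    have := Real.lt_sqrt (x := a) (y := a^2+4*b) ha.le
    exact (this.mpr (by nlinarith))
  nlinarith [sq_nonneg (t - (a+s)/2)]

lemma quad_lt {a b t : ℝ} (ha : 0 < a) (hb : 0 < b) (ht : 0 ≤ t)
    (h : t^2 < a*t + b) : t < (a + Real.sqrt (a^2 + 4*b)) / 2 := by
  set s := Real.sqrt (a^2 + 4*b) with hs
  have hs2 : s^2 = a^2 + 4*b := Real.sq_sqrt (by nlinarith)
  have hsa : a < s := by
    have := Real.lt_sqrt (x := a) (y := a^2+4*b) ha.le
    exact (this.mpr (by nlinarith))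
  by_contra hc
  push_neg at hc
  nlinarith

/-- r² = a r + b for the positive root. -/
lemma quad_root_sq {a b : ℝ} (ha : 0 < a) (hb : 0 < b) :
    ((a + Real.sqrt (a^2 + 4*b)) / 2)^2
      = a * ((a + Real.sqrt (a^2 + 4*b)) / 2) + b := by
  have hs2 : (Real.sqrt (a^2+4*b))^2 = a^2 + 4*b := Real.sq_sqrt (by nlinarith)
  nlinarith

section Stoch
variable {n : ℕ} (W : Matrix (Fin n) (Fin n) ℝ)

/-- row-stochastic: all-ones eigenvector over ℂ. -/
lemma ones_eigen (hWrow : ∀ i, ∑ j, W i j = 1) :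
    (W.map Complex.ofReal).mulVec (fun _ => 1) = (fun _ => 1) := by
  funext i
  simp only [Matrix.mulVec, dotProduct, Matrix.map_apply, mul_one]
  rw [← Complex.ofReal_sum]
  simp [hWrow i]

lemma one_mem_spec (hn : 0 < n) (hWrow : ∀ i, ∑ j, W i j = 1) :
    (1 : ℂ) ∈ spectrum ℂ (W.map Complex.ofReal) := by
  rw [mem_spec_iff]
  refine ⟨fun _ => 1, ?_, by simp [ones_eigen W hWrow]⟩
  intro h
  have := congrFun h ⟨0, hn⟩
  simp at this

lemma spec_abs_le_one (hWnn : ∀ i j, 0 ≤ W i j) (hWrow : ∀ i, ∑ j, W i j = 1)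
    {z : ℂ} (hz : z ∈ spectrum ℂ (W.map Complex.ofReal)) :
    ‖z‖ ≤ 1 := by
  set A := W.map Complex.ofReal with hA
  obtain ⟨v, hv0, hv⟩ := (mem_spec_iff A z).mp hz
  have heig : Module.End.HasEigenvalue (Matrix.toLin' A) z :=
    Module.End.hasEigenvalue_of_hasEigenvector
      ⟨Module.End.mem_eigenspace_iff.mpr (by simpa [Matrix.toLin'_apply] using hv), hv0⟩
  obtain ⟨k, hk⟩ := eigenvalue_mem_ball heig
  rw [Metric.mem_closedBall, dist_eq_norm] at hk
  have hnorm : ∀ i j, ‖A i j‖ = W i j := by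
    intro i j
    simp [hA, Matrix.map_apply, Complex.norm_real, Real.norm_eq_abs,
      abs_of_nonneg (hWnn i j)]
  have h1 : ‖z‖ ≤ ‖z - A k k‖ + ‖A k k‖ := by
    simpa using norm_add_le (z - A k k) (A k k)
  have h2 : ‖z - A k k‖ + ‖A k k‖ ≤ (∑ j ∈ Finset.univ.erase k, W k j) + W k k := by
    gcongr
    · calc ‖z - A k k‖ ≤ ∑ j ∈ Finset.univ.erase k, ‖A k j‖ := hk
        _ = ∑ j ∈ Finset.univ.erase k, W k j := by
            exact Finset.sum_congr rfl fun j _ => hnorm k j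
    · exact le_of_eq (hnorm k k)
  have h3 : (∑ j ∈ Finset.univ.erase k, W k j) + W k k = 1 := by
    rw [Finset.sum_erase_add _ _ (Finset.mem_univ k)]
    exact hWrow k
  calc ‖z‖ = ‖z‖ := rfl
    _ ≤ _ := h1
    _ ≤ _ := h2
    _ = 1 := h3

end Stoch

/-- The spectral radius of a real square matrix: the supremum of the moduli of its
complex eigenvalues (elements of the spectrum of the matrix viewed over `ℂ`). -/
noncomputable def specRad {m : Type*} [Fintype m] [DecidableEq m]
    (M : Matrix m m ℝ) : ℝ :=
  sSup ((fun z : ℂ => ‖z‖) '' spectrum ℂ (M.map Complex.ofReal))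

set_option maxHeartbeats 1600000 in
/-- **Exact convergence rate for inertia/memory mixtures (Proposition 3).**
Let `W` be row-stochastic, `σ ∈ (0,1)`, `β₀ ∈ (0,1)`, `α₁, α₂ ≥ 0`, `α₁+α₂ = 1`,
`Λ = σI`, `W̃ = α₁W + α₂I`, `W¹ = (1-β₀)W`, `W² = β₀W̃`, and
`Ā_d = [[0, I], [σW², σW¹]]`.  Then
`ρ(Ā_d) = (σ(1-β₀) + √(σ²(1-β₀)² + 4σβ₀))/2 > σ = ρ(σW)`; in particular `ρ(Ā_d)`
depends neither on `α₁, α₂` nor on the stochastic matrix `W`. -/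
theorem fjmm_rate_inertia_memory_mixture
    (n : ℕ) (hn : 0 < n) (W : Matrix (Fin n) (Fin n) ℝ)
    (hWnn : ∀ i j, 0 ≤ W i j) (hWrow : ∀ i, ∑ j, W i j = 1)
    (σ β₀ α₁ α₂ : ℝ)
    (hσ : σ ∈ Set.Ioo (0:ℝ) 1) (hβ : β₀ ∈ Set.Ioo (0:ℝ) 1)
    (hα₁ : 0 ≤ α₁) (hα₂ : 0 ≤ α₂) (hα : α₁ + α₂ = 1) :
    specRad (Matrix.fromBlocks (0 : Matrix (Fin n) (Fin n) ℝ)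
        (1 : Matrix (Fin n) (Fin n) ℝ)
        ((σ * β₀) • (α₁ • W + α₂ • (1 : Matrix (Fin n) (Fin n) ℝ)))
        ((σ * (1 - β₀)) • W)) =
      (σ * (1 - β₀) + Real.sqrt (σ^2 * (1 - β₀)^2 + 4 * σ * β₀)) / 2 ∧
    σ < (σ * (1 - β₀) + Real.sqrt (σ^2 * (1 - β₀)^2 + 4 * σ * β₀)) / 2 ∧
    specRad (σ • W) = σ := by
  refine ⟨?_, ?_, ?_⟩
  · -- Part 1: spectral radius of block matrix
    obtain ⟨hσ0, hσ1⟩ := hσ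
    obtain ⟨hβ0, hβ1⟩ := hβ
    have ha : 0 < σ * (1 - β₀) := by nlinarith
    have hb : 0 < σ * β₀ := by nlinarith
    set a := σ * (1 - β₀) with ha_def
    set b := σ * β₀ with hb_def
    have hαC : (α₁:ℂ) + (α₂:ℂ) = 1 := by exact_mod_cast hα
    have hsqrt : σ^2 * (1 - β₀)^2 + 4 * σ * β₀ = a^2 + 4*b := by
      rw [ha_def, hb_def]; ring
    rw [hsqrt]
    set r := (a + Real.sqrt (a^2 + 4*b)) / 2 with hr_def
    have hr2 : r^2 = a * r + b := quad_root_sq ha hb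
    have hr0 : 0 < r := by
      have : 0 ≤ Real.sqrt (a^2+4*b) := Real.sqrt_nonneg _
      rw [hr_def]; linarith
    have hrr : (r:ℂ)*(r:ℂ) = (a:ℂ)*(r:ℂ) + (b:ℂ) :=
      by exact_mod_cast congrArg Complex.ofReal (show r*r = a*r+b by nlinarith [hr2])
    set Wc := W.map Complex.ofReal with hWc
    set Cc := (b : ℝ) • ((α₁:ℝ) • Wc + (α₂:ℝ) • (1 : Matrix (Fin n) (Fin n) ℂ)) with hCc
    set Dc := (a : ℝ) • Wc with hDc
    have hmap : (Matrix.fromBlocks (0 : Matrix (Fin n) (Fin n) ℝ)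
          (1 : Matrix (Fin n) (Fin n) ℝ)
          (b • (α₁ • W + α₂ • (1 : Matrix (Fin n) (Fin n) ℝ)))
          (a • W)).map Complex.ofReal
        = Matrix.fromBlocks 0 1 Cc Dc := by
      rw [Matrix.fromBlocks_map]
      have h0 : (0 : Matrix (Fin n) (Fin n) ℝ).map Complex.ofReal = 0 :=
        Matrix.map_zero _ Complex.ofReal_zero
      have h1 : (1 : Matrix (Fin n) (Fin n) ℝ).map Complex.ofReal = 1 :=
        Matrix.map_one _ Complex.ofReal_zero Complex.ofReal_one
      have hC : (b • (α₁ • W + α₂ • (1 : Matrix (Fin n) (Fin n) ℝ))).map Complex.ofReal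
          = Cc := by
        ext i j
        simp only [hCc, hWc, Matrix.map_apply, Matrix.smul_apply, Matrix.add_apply,
          Matrix.one_apply, smul_eq_mul, Complex.real_smul]
        split_ifs <;> push_cast <;> ring
      have hD : ((a • W)).map Complex.ofReal = Dc := by
        ext i j
        simp only [hDc, hWc, Matrix.map_apply, Matrix.smul_apply, smul_eq_mul, Complex.real_smul]
        push_cast; ring
      rw [h0, h1, hC, hD]
    rw [specRad, hmap]
    apply IsGreatest.csSup_eq
    constructor
    · -- r is attained
      refine ⟨(r : ℂ), ?_, by simp [abs_of_pos hr0]⟩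
      rw [mem_spec_iff]
      refine ⟨Sum.elim (fun _ => (1:ℂ)) (fun _ => (r:ℂ)), ?_, ?_⟩
      · intro h
        have := congrFun h (Sum.inl ⟨0, hn⟩)
        simp at this
      · rw [Matrix.fromBlocks_mulVec]
        have h1 : Cc.mulVec (fun _ => (1:ℂ)) = fun _ => (b:ℂ) := by
          rw [hCc, Matrix.smul_mulVec, Matrix.add_mulVec,
            Matrix.smul_mulVec, Matrix.smul_mulVec,
            Matrix.one_mulVec, ones_eigen W hWrow]
          funext k
          simp only [Pi.smul_apply, Pi.add_apply, Complex.real_smul, mul_one]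
          linear_combination (b:ℂ) * hαC
        have h2 : Dc.mulVec (fun _ => (r:ℂ)) = fun _ => (a:ℂ) * (r:ℂ) := by
          have hv : (fun _ => (r:ℂ)) = (r:ℂ) • (fun (_ : Fin n) => (1:ℂ)) := by
            funext k; simp
          rw [hv, Matrix.mulVec_smul, hDc, Matrix.smul_mulVec, ones_eigen W hWrow]
          funext k
          simp only [Pi.smul_apply, Complex.real_smul, smul_eq_mul, mul_one]
          ring
        funext i
        rcases i with i | i
        · simp [Sum.elim_comp_inl, Sum.elim_comp_inr]
        · simp only [Sum.elim_comp_inl, Sum.elim_comp_inr, Sum.elim_inr, Pi.add_apply,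
            Pi.smul_apply, smul_eq_mul, h1, h2, Matrix.zero_mulVec, Matrix.one_mulVec,
            zero_add]
          linear_combination -hrr
    · -- upper bound
      rintro t ⟨z, hz, rfl⟩
      obtain ⟨v, hv0, hv⟩ := (mem_spec_iff _ z).mp hz
      rw [Matrix.fromBlocks_mulVec] at hv
      set x := v ∘ Sum.inl with hx
      set y := v ∘ Sum.inr with hy
      have htop : y = z • x := by
        funext i
        have := congrFun hv (Sum.inl i)
        simpa [hx, Matrix.zero_mulVec, Matrix.one_mulVec] using this
      have hbot : Cc.mulVec x + Dc.mulVec y = z • y := by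
        funext i
        have := congrFun hv (Sum.inr i)
        simpa [hy] using this
      have hx0 : x ≠ 0 := by
        intro h
        apply hv0
        funext i
        rcases i with i | i
        · exact congrFun h i
        · show y i = 0
          rw [htop]; simp [congrFun h i]
      set c : ℂ := ((b*α₁ : ℝ) : ℂ) + z * (a:ℝ) with hc
      -- the key scalar identity
      have hkey : ∀ i, c * (Wc.mulVec x i)
          = (z*z - ((b*α₂:ℝ):ℂ)) * x i := by
        intro i
        have h3 := congrFun hbot i
        rw [htop] at h3
        simp only [hCc, hDc, Matrix.smul_mulVec, Matrix.add_mulVec,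
          Matrix.one_mulVec, Matrix.mulVec_smul, Pi.add_apply, Pi.smul_apply,
          Complex.real_smul, smul_eq_mul] at h3
        rw [hc]
        push_cast at h3 ⊢
        linear_combination h3
      by_cases hc0 : c = 0
      · -- then z² = b α₂
        have hzz : z*z = ((b*α₂ : ℝ) : ℂ) := by
          obtain ⟨i, hi⟩ := Function.ne_iff.mp hx0
          have h5 := hkey i
          rw [hc0, zero_mul] at h5
          have hi' : x i ≠ 0 := by simpa using hi
          rcases mul_eq_zero.mp h5.symm with h6 | h6
          · linear_combination h6
          · exact absurd h6 hi'
        have habs : ‖z‖^2 = b*α₂ := by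
          have h7 := congrArg (fun w : ℂ => ‖w‖) hzz
          rw [norm_mul, Complex.norm_real, Real.norm_eq_abs, abs_of_nonneg (by positivity)] at h7
          rw [← h7]; ring
        apply quad_le ha hb (norm_nonneg z)
        have h8 : b*α₂ ≤ b := by nlinarith
        nlinarith [norm_nonneg z]
      · -- c ≠ 0 : eigenvalue of Wc
        set μ : ℂ := (z*z - ((b*α₂:ℝ):ℂ)) / c with hμ
        have heig : Wc.mulVec x = μ • x := by
          funext i
          have h9 := hkey i
          rw [Pi.smul_apply, smul_eq_mul, hμ, div_mul_eq_mul_div, eq_div_iff hc0]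
          linear_combination h9
        have hmem : μ ∈ spectrum ℂ Wc := (mem_spec_iff _ _).mpr ⟨x, hx0, heig⟩
        have hμ1 : ‖μ‖ ≤ 1 := spec_abs_le_one W hWnn hWrow hmem
        have hcabs : ‖c‖ ≤ b*α₁ + a * ‖z‖ := by
          calc ‖c‖ ≤ ‖((b*α₁:ℝ):ℂ)‖ + ‖z * (a:ℝ)‖ :=
                norm_add_le _ _
            _ = b*α₁ + a * ‖z‖ := by
                rw [norm_mul, Complex.norm_real, Complex.norm_real, Real.norm_eq_abs, Real.norm_eq_abs,
                  abs_of_nonneg (by positivity : (0:ℝ) ≤ b*α₁), abs_of_nonneg ha.le]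
                ring
        have hnum : ‖z*z - ((b*α₂:ℝ):ℂ)‖ ≤ b*α₁ + a * ‖z‖ := by
          have h10 : ‖z*z - ((b*α₂:ℝ):ℂ)‖ = ‖μ‖ * ‖c‖ := by
            rw [hμ, norm_div, div_mul_cancel₀ _ (norm_ne_zero_iff.mpr hc0)]
          rw [h10]
          calc ‖μ‖ * ‖c‖ ≤ 1 * ‖c‖ :=
                mul_le_mul_of_nonneg_right hμ1 (norm_nonneg c)
            _ = ‖c‖ := one_mul _
            _ ≤ _ := hcabs
        have hzsq : (‖z‖)^2 ≤ a * ‖z‖ + b := by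
          have h6 : ‖z*z‖ = (‖z‖)^2 := by
            rw [norm_mul]; ring
          have h7 : ‖z*z‖ ≤ ‖z*z - ((b*α₂:ℝ):ℂ)‖ + b*α₂ := by
            have h11 := norm_add_le (z*z - ((b*α₂:ℝ):ℂ)) ((b*α₂:ℝ):ℂ)
            have h12 : z*z - ((b*α₂:ℝ):ℂ) + ((b*α₂:ℝ):ℂ) = z*z := by ring
            rw [h12, Complex.norm_real, Real.norm_eq_abs,
              abs_of_nonneg (show (0:ℝ) ≤ b*α₂ by positivity)] at h11
            exact h11
          nlinarith [hnum, h6, h7]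
        exact quad_le ha hb (norm_nonneg z) hzsq
  · -- Part 2: σ < r
    obtain ⟨hσ0, hσ1⟩ := hσ
    obtain ⟨hβ0, hβ1⟩ := hβ
    have ha : 0 < σ * (1 - β₀) := by nlinarith
    have hb : 0 < σ * β₀ := by nlinarith
    have hsqrt : σ^2 * (1 - β₀)^2 + 4 * σ * β₀ = (σ*(1-β₀))^2 + 4*(σ*β₀) := by ring
    rw [hsqrt]
    exact quad_lt ha hb hσ0.le (by nlinarith)
  · -- Part 3
    obtain ⟨hσ0, hσ1⟩ := hσ
    set Wc := W.map Complex.ofReal with hWc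
    have hmap : (σ • W).map Complex.ofReal = (σ : ℂ) • Wc := by
      ext i j
      simp [hWc, Matrix.map_apply, Matrix.smul_apply, Complex.ofReal_mul]
    rw [specRad, hmap]
    apply IsGreatest.csSup_eq
    constructor
    · refine ⟨(σ : ℂ), ?_, by simp [abs_of_pos hσ0]⟩
      rw [mem_spec_iff]
      refine ⟨fun _ => 1, ?_, ?_⟩
      · intro h
        have := congrFun h ⟨0, hn⟩
        simp at this
      · rw [Matrix.smul_mulVec, ones_eigen W hWrow]
    · rintro x ⟨z, hz, rfl⟩
      obtain ⟨v, hv0, hv⟩ := (mem_spec_iff _ z).mp hz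
      rw [Matrix.smul_mulVec] at hv
      have hσc : (σ : ℂ) ≠ 0 := by
        simp only [ne_eq, Complex.ofReal_eq_zero]; exact hσ0.ne'
      have hv' : Wc.mulVec v = (z / σ) • v := by
        have h2 : (σ:ℂ) • (Wc.mulVec v) = (σ:ℂ) • ((z/σ) • v) := by
          rw [hv, smul_smul]
          congr 1
          field_simp
        exact smul_right_injective _ hσc h2
      have hmem : z / σ ∈ spectrum ℂ Wc := (mem_spec_iff _ _).mpr ⟨v, hv0, hv'⟩
      have hle := spec_abs_le_one W hWnn hWrow hmem
      rw [norm_div, Complex.norm_real, Real.norm_eq_abs, abs_of_pos hσ0, div_le_one hσ0] at hle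
      exact hle
end

section
/- Let W be a row-stochastic n×n matrix, σ ∈ (0,1), and β₀ ∈ (0,1). Set Λ = σI, W^(1) = (1−β₀)W, W^(2) = β₀W² (the secondary-neighbors case), and Ā_d = [[0, I],[σ W^(2), σ W^(1)]]. Then ρ(Ā_d) = ( σ(1−β₀) + √( σ²(1−β₀)² + 4σβ₀ ) ) / 2 > σ = ρ(σW); in particular, the FJ-MM model converges strictly slower than the comparison FJ model and than the original FJ model with matrix W. -/
open Matrix

lemma matrix_mem_spectrum_iff {m : Type*} [Fintype m] [DecidableEq m]
    (M : Matrix m m ℂ) (μ : ℂ) :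
    μ ∈ spectrum ℂ M ↔ ∃ v : m → ℂ, v ≠ 0 ∧ M.mulVec v = μ • v := by
  have key : ∀ v : m → ℂ,
      (algebraMap ℂ (Matrix m m ℂ) μ - M).mulVec v = μ • v - M.mulVec v := by
    intro v
    rw [Matrix.sub_mulVec, Algebra.algebraMap_eq_smul_one, Matrix.smul_mulVec,
      Matrix.one_mulVec]
  rw [spectrum.mem_iff, Matrix.isUnit_iff_isUnit_det, isUnit_iff_ne_zero, not_not,
    ← Matrix.exists_mulVec_eq_zero_iff]
  simp_rw [key, sub_eq_zero]
  constructor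
  · rintro ⟨v, h1, h2⟩; exact ⟨v, h1, h2.symm⟩
  · rintro ⟨v, h1, h2⟩; exact ⟨v, h1, h2.symm⟩

lemma stoch_eig_abs_le {n : ℕ} {W : Matrix (Fin n) (Fin n) ℝ}
    (hWnn : ∀ i j, 0 ≤ W i j) (hWrow : ∀ i, ∑ j, W i j = 1)
    {μ : ℂ} {v : Fin n → ℂ} (hv : v ≠ 0)
    (h : (W.map Complex.ofReal).mulVec v = μ • v) : ‖μ‖ ≤ 1 := by
  obtain ⟨j0, hj0⟩ : ∃ j, v j ≠ 0 := by
    by_contra hcon; push_neg at hcon; exact hv (funext fun j => hcon j)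
  obtain ⟨i, -, hi⟩ := Finset.exists_max_image Finset.univ (fun j => ‖v j‖)
    ⟨j0, Finset.mem_univ _⟩
  have hvi : 0 < ‖v i‖ :=
    lt_of_lt_of_le (by simpa using hj0) (hi j0 (Finset.mem_univ _))
  have hrow := congrFun h i
  simp only [Matrix.mulVec, dotProduct, Matrix.map_apply, Pi.smul_apply,
    smul_eq_mul] at hrow
  have h1 : ‖μ * v i‖ ≤ ∑ j, W i j * ‖v j‖ := by
    rw [← hrow]
    refine le_trans (norm_sum_le _ _) (le_of_eq ?_)
    refine Finset.sum_congr rfl fun j _ => ?_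
    rw [norm_mul, Complex.norm_real, Real.norm_eq_abs, abs_of_nonneg (hWnn i j)]
  have h2 : ∑ j, W i j * ‖v j‖ ≤ ‖v i‖ := by
    calc ∑ j, W i j * ‖v j‖
        ≤ ∑ j, W i j * ‖v i‖ := by
          refine Finset.sum_le_sum fun j _ => ?_
          exact mul_le_mul_of_nonneg_left (hi j (Finset.mem_univ _)) (hWnn i j)
      _ = ‖v i‖ := by rw [← Finset.sum_mul, hWrow i, one_mul]
  rw [norm_mul] at h1
  have h3 := le_trans h1 h2
  exact le_of_mul_le_mul_right (by linarith) hvi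

lemma quad_root_bound {b c r t : ℝ} (hr : 0 < r) (hrb : b ≤ r)
    (hrq : r^2 = b*r + c) (ht : 0 ≤ t) (h : t^2 ≤ c * 1 + t * b) : t ≤ r := by
  nlinarith

lemma stoch_ones {n : ℕ} {W : Matrix (Fin n) (Fin n) ℝ}
    (hWrow : ∀ i, ∑ j, W i j = 1) :
    (W.map Complex.ofReal).mulVec (fun _ => (1:ℂ)) = fun _ => 1 := by
  funext i
  simp only [Matrix.mulVec, dotProduct, Matrix.map_apply, mul_one]
  rw [← Complex.ofReal_sum, hWrow i, Complex.ofReal_one]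

set_option maxHeartbeats 1000000 in
/-- **Exact convergence rate in the secondary-neighbors case (Proposition 4).**
Let `W` be row-stochastic, `σ ∈ (0,1)`, `β₀ ∈ (0,1)`, `Λ = σI`, `W¹ = (1-β₀)W`,
`W² = β₀W²` (matrix square), and `Ā_d = [[0, I], [σW², σW¹]]`.  Then
`ρ(Ā_d) = (σ(1-β₀) + √(σ²(1-β₀)² + 4σβ₀))/2 > σ = ρ(σW)`: the FJ-MM model converges
strictly slower than the comparison FJ model and the original FJ model with matrix `W`. -/
theorem fjmm_rate_secondary_neighbors
    (n : ℕ) (hn : 0 < n) (W : Matrix (Fin n) (Fin n) ℝ)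
    (hWnn : ∀ i j, 0 ≤ W i j) (hWrow : ∀ i, ∑ j, W i j = 1)
    (σ β₀ : ℝ)
    (hσ : σ ∈ Set.Ioo (0:ℝ) 1) (hβ : β₀ ∈ Set.Ioo (0:ℝ) 1) :
    specRad (Matrix.fromBlocks (0 : Matrix (Fin n) (Fin n) ℝ)
        (1 : Matrix (Fin n) (Fin n) ℝ)
        ((σ * β₀) • (W * W)) ((σ * (1 - β₀)) • W)) =
      (σ * (1 - β₀) + Real.sqrt (σ^2 * (1 - β₀)^2 + 4 * σ * β₀)) / 2 ∧
    σ < (σ * (1 - β₀) + Real.sqrt (σ^2 * (1 - β₀)^2 + 4 * σ * β₀)) / 2 ∧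
    specRad (σ • W) = σ := by
  obtain ⟨hσ0, hσ1⟩ := hσ
  obtain ⟨hβ0, hβ1⟩ := hβ
  have hbpos : 0 < σ * (1 - β₀) := mul_pos hσ0 (by linarith)
  have hcpos : 0 < σ * β₀ := mul_pos hσ0 hβ0
  set b : ℝ := σ * (1 - β₀) with hbdef
  set c : ℝ := σ * β₀ with hcdef
  set s : ℝ := Real.sqrt (σ^2 * (1 - β₀)^2 + 4 * σ * β₀) with hsdef
  have hsnn : 0 ≤ s := Real.sqrt_nonneg _
  have hsq : s^2 = b^2 + 4*c := by
    rw [hsdef, Real.sq_sqrt (by positivity)]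
    rw [hbdef, hcdef]; ring
  have hreq : (σ * (1 - β₀) + Real.sqrt (σ^2 * (1 - β₀)^2 + 4 * σ * β₀)) / 2
      = (b + s) / 2 := rfl
  set r : ℝ := (b + s) / 2 with hrdef
  have hrpos : 0 < r := by rw [hrdef]; linarith
  have hsb : b ≤ s := by nlinarith
  have hrb : b ≤ r := by rw [hrdef]; linarith
  have hrquad : r^2 = b*r + c := by rw [hrdef]; nlinarith [hsq]
  have hσr : σ < r := by
    have h1 : (2*σ - b)^2 < s^2 := by
      rw [hsq, hbdef, hcdef]
      nlinarith [mul_pos (mul_pos hσ0 hβ0) (sub_pos.2 hσ1)]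
    rw [hrdef]; nlinarith [hsnn]
  set Wc : Matrix (Fin n) (Fin n) ℂ := W.map Complex.ofReal with hWc
  have hmap : (Matrix.fromBlocks (0 : Matrix (Fin n) (Fin n) ℝ)
        (1 : Matrix (Fin n) (Fin n) ℝ)
        ((σ * β₀) • (W * W)) ((σ * (1 - β₀)) • W)).map Complex.ofReal
      = Matrix.fromBlocks (0 : Matrix (Fin n) (Fin n) ℂ) (1 : Matrix (Fin n) (Fin n) ℂ) ((c:ℂ) • (Wc * Wc)) ((b:ℂ) • Wc) := by
    ext i j
    rcases i with i|i <;> rcases j with j|j <;>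
      simp [hWc, hbdef, hcdef, Matrix.map_apply, Matrix.one_apply, Matrix.mul_apply,
        apply_ite] <;>
      push_cast <;> ring
  have hones := stoch_ones (W := W) hWrow
  rw [← hWc] at hones
  have hWW : (Wc * Wc).mulVec (fun _ => (1:ℂ)) = fun _ => 1 := by
    rw [← Matrix.mulVec_mulVec, hones, hones]
  have hWr : Wc.mulVec (fun _ => (r:ℂ)) = fun _ => (r:ℂ) := by
    have h1 : (fun _ => (r:ℂ)) = (r:ℂ) • (fun (_ : Fin n) => (1:ℂ)) := by
      funext k; simp
    rw [h1, Matrix.mulVec_smul, hones]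
  -- upper bound for the block matrix spectrum
  have hub : ∀ lam ∈ spectrum ℂ
      (Matrix.fromBlocks (0 : Matrix (Fin n) (Fin n) ℂ) (1 : Matrix (Fin n) (Fin n) ℂ) ((c:ℂ) • (Wc * Wc)) ((b:ℂ) • Wc)),
      ‖lam‖ ≤ r := by
    intro lam hlam
    obtain ⟨v, hv, hEq⟩ := (matrix_mem_spectrum_iff _ _).mp hlam
    set x : Fin n → ℂ := fun i => v (Sum.inl i) with hxdef
    set y : Fin n → ℂ := fun i => v (Sum.inr i) with hydef
    have hveq : v = Sum.elim x y := by funext k; cases k <;> rfl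
    rw [hveq, Matrix.fromBlocks_mulVec] at hEq
    have htop : y = lam • x := by
      funext i
      have h := congrFun hEq (Sum.inl i)
      simpa using h
    have hbot : (c:ℂ) • ((Wc * Wc).mulVec x) + (b:ℂ) • (Wc.mulVec y) = lam • y := by
      funext i
      have h := congrFun hEq (Sum.inr i)
      simpa [Matrix.smul_mulVec] using h
    have hx0 : x ≠ 0 := by
      intro h
      apply hv
      have hy0 : y = 0 := by rw [htop, h, smul_zero]
      funext k
      cases k <;> simp [hveq, h, hy0]
    have hWy : Wc.mulVec y = lam • (Wc.mulVec x) := by rw [htop, Matrix.mulVec_smul]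
    have hlamy : lam • y = (lam^2) • x := by rw [htop, smul_smul, sq]
    rw [hWy, hlamy, smul_smul] at hbot
    have hP : ((c:ℂ) • (Wc * Wc) + (lam * (b:ℂ)) • Wc - (lam^2) • 1).mulVec x = 0 := by
      rw [Matrix.sub_mulVec, Matrix.add_mulVec, Matrix.smul_mulVec,
        Matrix.smul_mulVec, Matrix.smul_mulVec, Matrix.one_mulVec,
        sub_eq_zero, mul_comm lam]
      exact hbot
    have hdet : ((c:ℂ) • (Wc * Wc) + (lam * (b:ℂ)) • Wc - (lam^2) • 1).det = 0 :=
      Matrix.exists_mulVec_eq_zero_iff.mp ⟨x, hx0, hP⟩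
    have hnu : ¬ IsUnit ((c:ℂ) • (Wc * Wc) + (lam * (b:ℂ)) • Wc - (lam^2) • 1) := by
      rw [Matrix.isUnit_iff_isUnit_det, hdet]
      exact not_isUnit_zero
    set p : Polynomial ℂ := Polynomial.C (c:ℂ) * Polynomial.X^2
      + Polynomial.C (lam * (b:ℂ)) * Polynomial.X + Polynomial.C (-(lam^2)) with hpdef
    have hc0 : ((c:ℝ):ℂ) ≠ 0 := by exact_mod_cast hcpos.ne'
    have hPeq : Polynomial.aeval Wc p
        = (c:ℂ) • (Wc * Wc) + (lam * (b:ℂ)) • Wc - (lam^2) • 1 := by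
      simp only [hpdef, _root_.map_add, _root_.map_mul, Polynomial.aeval_C, Polynomial.aeval_X, _root_.map_pow]
      simp only [Algebra.algebraMap_eq_smul_one, smul_mul_assoc, one_mul, neg_smul, sq]
      rw [smul_smul]
      abel
    have hdeg : 0 < p.degree := by
      rw [hpdef, Polynomial.degree_quadratic hc0]
      norm_num
    have h0 : (0:ℂ) ∈ spectrum ℂ (Polynomial.aeval Wc p) := by
      rw [hPeq]; exact (spectrum.zero_mem_iff (R := ℂ)).mpr hnu
    rw [spectrum.map_polynomial_aeval_of_degree_pos Wc p hdeg] at h0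
    obtain ⟨μ, hμspec, hμeval⟩ := h0
    simp only [hpdef, Polynomial.eval_add, Polynomial.eval_mul, Polynomial.eval_C,
      Polynomial.eval_pow, Polynomial.eval_X] at hμeval
    -- hμeval : c * μ^2 + lam * b * μ + -(lam^2) = 0
    have h1 : lam^2 = (c:ℂ) * μ^2 + lam * (b:ℂ) * μ := by linear_combination -hμeval
    obtain ⟨w, hw, hweq⟩ := (matrix_mem_spectrum_iff _ _).mp hμspec
    have habsμ : ‖μ‖ ≤ 1 := stoch_eig_abs_le hWnn hWrow hw hweq
    have e1 : ‖lam‖ ^ 2 = ‖(c:ℂ) * μ^2 + lam * (b:ℂ) * μ‖ := by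
      rw [← h1, norm_pow]
    have e2 : ‖(c:ℂ) * μ^2 + lam * (b:ℂ) * μ‖
        ≤ c * ‖μ‖ ^ 2 + ‖lam‖ * b * ‖μ‖ := by
      refine le_trans (norm_add_le _ _) ?_
      rw [norm_mul, norm_mul, norm_mul, norm_pow, Complex.norm_real, Complex.norm_real, Real.norm_eq_abs, Real.norm_eq_abs,
        abs_of_pos hcpos, abs_of_pos hbpos]
    have hanl : 0 ≤ ‖lam‖ := norm_nonneg _
    have hanμ : 0 ≤ ‖μ‖ := norm_nonneg _
    have hμ2 : ‖μ‖ ^ 2 ≤ 1 := by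
      calc ‖μ‖ ^ 2 ≤ 1 ^ 2 := by
            exact pow_le_pow_left₀ hanμ habsμ 2
        _ = 1 := one_pow 2
    have e3 : c * ‖μ‖ ^ 2 ≤ c * 1 := mul_le_mul_of_nonneg_left hμ2 hcpos.le
    have e4 : ‖lam‖ * b * ‖μ‖ ≤ ‖lam‖ * b :=
      mul_le_of_le_one_right (mul_nonneg hanl hbpos.le) habsμ
    have key : ‖lam‖ ^ 2 ≤ c * 1 + ‖lam‖ * b := by
      rw [e1]; linarith
    exact quad_root_bound hrpos hrb hrquad hanl key
  -- membership of r in the spectrum image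
  have hu0 : (Sum.elim (fun _ => (1:ℂ)) (fun _ => (r:ℂ)) : Fin n ⊕ Fin n → ℂ) ≠ 0 := by
    intro h
    have := congrFun h (Sum.inl ⟨0, hn⟩)
    simpa using this
  have hAu : (Matrix.fromBlocks (0 : Matrix (Fin n) (Fin n) ℂ) (1 : Matrix (Fin n) (Fin n) ℂ) ((c:ℂ) • (Wc * Wc)) ((b:ℂ) • Wc)).mulVec
      (Sum.elim (fun _ => (1:ℂ)) (fun _ => (r:ℂ)))
      = (r:ℂ) • (Sum.elim (fun _ => (1:ℂ)) (fun _ => (r:ℂ))) := by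
    rw [Matrix.fromBlocks_mulVec, Sum.elim_comp_inl, Sum.elim_comp_inr,
      Matrix.smul_mulVec, Matrix.smul_mulVec,
      hWW, hWr, Matrix.zero_mulVec, Matrix.one_mulVec]
    funext k
    rcases k with i|i
    · simp
    · simp only [Sum.elim_inr, Pi.add_apply, Pi.smul_apply, smul_eq_mul, mul_one]
      have hre : c + b * r = r * r := by nlinarith [hrquad]
      exact_mod_cast hre
  have hrmem : (r:ℂ) ∈ spectrum ℂ
      (Matrix.fromBlocks (0 : Matrix (Fin n) (Fin n) ℂ) (1 : Matrix (Fin n) (Fin n) ℂ) ((c:ℂ) • (Wc * Wc)) ((b:ℂ) • Wc)) :=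
    (matrix_mem_spectrum_iff _ _).mpr ⟨_, hu0, hAu⟩
  have part1 : specRad (Matrix.fromBlocks (0 : Matrix (Fin n) (Fin n) ℝ)
        (1 : Matrix (Fin n) (Fin n) ℝ)
        ((σ * β₀) • (W * W)) ((σ * (1 - β₀)) • W)) = r := by
    rw [specRad, hmap]
    refine IsGreatest.csSup_eq ⟨⟨(r:ℂ), hrmem, ?_⟩, ?_⟩
    · simp [Complex.norm_real, abs_of_pos hrpos]
    · rintro t ⟨lam, hlam, rfl⟩
      exact hub lam hlam
  -- the σ • W part
  have hmapσ : (σ • W).map Complex.ofReal = (σ:ℂ) • Wc := by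
    ext i j
    simp [hWc, Matrix.map_apply]
  have hσne : ((σ:ℝ):ℂ) ≠ 0 := by exact_mod_cast hσ0.ne'
  have part3 : specRad (σ • W) = σ := by
    rw [specRad, hmapσ]
    refine IsGreatest.csSup_eq ⟨⟨(σ:ℂ), ?_, ?_⟩, ?_⟩
    · refine (matrix_mem_spectrum_iff _ _).mpr ⟨fun _ => (1:ℂ), ?_, ?_⟩
      · intro h
        have := congrFun h ⟨0, hn⟩
        simpa using this
      · rw [Matrix.smul_mulVec, hones]
    · simp [Complex.norm_real, abs_of_pos hσ0]
    · rintro t ⟨lam, hlam, rfl⟩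
      obtain ⟨v, hv, hveq⟩ := (matrix_mem_spectrum_iff _ _).mp hlam
      rw [Matrix.smul_mulVec] at hveq
      have hWv : Wc.mulVec v = (((σ:ℂ))⁻¹ * lam) • v := by
        rw [mul_smul, ← hveq, inv_smul_smul₀ hσne]
      have hle := stoch_eig_abs_le hWnn hWrow hv hWv
      rw [norm_mul, norm_inv, Complex.norm_real, Real.norm_eq_abs, abs_of_pos hσ0] at hle
      have hσinv : σ * σ⁻¹ = 1 := mul_inv_cancel₀ hσ0.ne'
      nlinarith [mul_le_mul_of_nonneg_left hle hσ0.le, hσinv]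
  exact ⟨hreq ▸ part1, hreq ▸ hσr, part3⟩
end

section
/- Let W be an n×n complex (or real) matrix, σ, β₀ real numbers, and consider the 2n×2n block matrix Ā_d = [[0, I],[σβ₀ W², σ(1−β₀) W]]. A complex number λ is an eigenvalue of Ā_d if and only if there exists an eigenvalue μ of W such that λ² = σ(1−β₀) μ λ + σβ₀ μ². Moreover, if W is row-stochastic, σ ∈ (0,1), β₀ ∈ (0,1), and λ is real, then any eigenvalue μ of W satisfying this relation is necessarily real. -/
open Matrix

section fjmmAux
open Polynomial Module


lemma eig_iff (n : ℕ) (W : Matrix (Fin n) (Fin n) ℂ) (μ : ℂ) :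
    (∃ u : Fin n → ℂ, u ≠ 0 ∧ W.mulVec u = μ • u) ↔
      Module.End.HasEigenvalue (Matrix.toLin' W) μ := by
  constructor
  · rintro ⟨u, hu, h⟩
    exact Module.End.hasEigenvalue_of_hasEigenvector ⟨Module.End.mem_eigenspace_iff.mpr (by
      rw [Matrix.toLin'_apply]; exact h), hu⟩
  · intro h
    obtain ⟨u, hmem, hu⟩ := h.exists_hasEigenvector
    exact ⟨u, hu, by rw [← Matrix.toLin'_apply W]; exact Module.End.mem_eigenspace_iff.mp hmem⟩


lemma fjmm_aux_forward (n : ℕ) (W : Matrix (Fin n) (Fin n) ℂ) (c₁ c₂ lam : ℂ)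
    (v : Fin n ⊕ Fin n → ℂ) (hv : v ≠ 0)
    (hmul : (Matrix.fromBlocks (0 : Matrix (Fin n) (Fin n) ℂ) (1 : Matrix (Fin n) (Fin n) ℂ)
          (c₂ • (W * W)) (c₁ • W)).mulVec v = lam • v) :
    ∃ μ : ℂ, (∃ u : Fin n → ℂ, u ≠ 0 ∧ W.mulVec u = μ • u) ∧
      lam ^ 2 = c₁ * μ * lam + c₂ * μ ^ 2 := by
  set v1 : Fin n → ℂ := v ∘ Sum.inl with hv1def
  set v2 : Fin n → ℂ := v ∘ Sum.inr with hv2def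
  rw [fromBlocks_mulVec] at hmul
  have h1 : v2 = lam • v1 := by
    funext i
    have := congrFun hmul (Sum.inl i)
    simpa [zero_mulVec, one_mulVec, hv1def, hv2def] using this
  have h2 : c₂ • (W * W).mulVec v1 + c₁ • W.mulVec v2 = lam • v2 := by
    funext i
    have := congrFun hmul (Sum.inr i)
    simpa [smul_mulVec, hv1def, hv2def] using this
  have hv1 : v1 ≠ 0 := by
    intro h0
    apply hv
    funext i
    cases i with
    | inl i => exact congrFun h0 i
    | inr i =>
      have e1 : v (Sum.inr i) = lam * v1 i := congrFun h1 i
      rw [h0] at e1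
      simpa using e1
  haveI : Nontrivial (Fin n → ℂ) := nontrivial_of_ne v1 0 hv1
  set f : Module.End ℂ (Fin n → ℂ) := Matrix.toLin' W with hfdef
  have hfW : ∀ u : Fin n → ℂ, f u = W.mulVec u := fun u => Matrix.toLin'_apply W u
  -- key identity
  have hkey : c₂ • f (f v1) + (c₁ * lam) • f v1 = (lam ^ 2) • v1 := by
    have h2' : c₂ • W.mulVec (W.mulVec v1) + (c₁ * lam) • W.mulVec v1 = (lam ^ 2) • v1 := by
      have h := h2
      rw [h1, Matrix.mulVec_smul, ← Matrix.mulVec_mulVec, smul_smul, smul_smul, ← pow_two] at h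
      exact h
    simp only [hfW]
    exact h2'
  set p := (C c₂ * X ^ 2 + C (c₁ * lam) * X + C (-(lam ^ 2)) : ℂ[X]) with hpdef
  have haev : (Polynomial.aeval f p) v1 = 0 := by
    simp only [hpdef, map_add, _root_.map_mul, _root_.map_pow, aeval_C, aeval_X,
      LinearMap.add_apply, Module.End.mul_apply, pow_two, Module.algebraMap_end_apply]
    rw [← mul_smul]
    rw [show c₂ • f (f v1) + (c₁ * lam) • f v1 = (lam * lam) • v1 from by
      rw [← pow_two]; exact hkey]
    simp [neg_smul]
  have main : 0 < p.degree → ∃ μ : ℂ, (∃ u : Fin n → ℂ, u ≠ 0 ∧ W.mulVec u = μ • u) ∧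
      lam ^ 2 = c₁ * μ * lam + c₂ * μ ^ 2 := by
    intro hdeg
    have hnu : ¬ IsUnit (Polynomial.aeval f p) := by
      intro h
      exact hv1 (by
        have hinj := (Module.End.isUnit_iff _).mp h |>.injective
        have : (Polynomial.aeval f p) v1 = (Polynomial.aeval f p) 0 := by simp [haev]
        exact hinj this)
    have h0spec : (0 : ℂ) ∈ spectrum ℂ (Polynomial.aeval f p) := by
      rw [spectrum.mem_iff]
      intro h
      simp only [map_zero, zero_sub] at h
      exact hnu (by simpa using h.neg)
    rw [spectrum.map_polynomial_aeval_of_degree_pos f p hdeg] at h0spec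
    obtain ⟨μ, hμspec, heval⟩ := h0spec
    refine ⟨μ, (eig_iff n W μ).mpr (Module.End.hasEigenvalue_iff_mem_spectrum.mpr hμspec), ?_⟩
    simp only [hpdef, eval_add, eval_mul, eval_C, eval_pow, eval_X] at heval
    linear_combination -heval
  by_cases hc₂ : c₂ = 0
  · by_cases hcl : c₁ * lam = 0
    · have hlam : lam = 0 := by
        have := hkey
        rw [hc₂, hcl, zero_smul, zero_smul, add_zero] at this
        have h0 : (lam ^ 2) • v1 = 0 := this.symm
        rcases smul_eq_zero.mp h0 with h | h
        · exact pow_eq_zero_iff (n := 2) (by norm_num) |>.mp h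
        · exact absurd h hv1
      obtain ⟨μ, hμ⟩ := Module.End.exists_eigenvalue f
      refine ⟨μ, (eig_iff n W μ).mpr hμ, ?_⟩
      rw [hlam, hc₂]; ring
    · apply main
      rw [hpdef, hc₂, map_zero, zero_mul, zero_add]
      rw [Polynomial.degree_linear hcl]
      norm_num
  · apply main
    rw [hpdef, Polynomial.degree_quadratic hc₂]
    norm_num

lemma fjmm_aux_backward (n : ℕ) (W : Matrix (Fin n) (Fin n) ℂ) (c₁ c₂ lam μ : ℂ)
    (u : Fin n → ℂ) (hu : u ≠ 0) (hWu : W.mulVec u = μ • u)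
    (hrel : lam ^ 2 = c₁ * μ * lam + c₂ * μ ^ 2) :
    ∃ v : Fin n ⊕ Fin n → ℂ, v ≠ 0 ∧
      (Matrix.fromBlocks (0 : Matrix (Fin n) (Fin n) ℂ) (1 : Matrix (Fin n) (Fin n) ℂ)
        (c₂ • (W * W)) (c₁ • W)).mulVec v = lam • v := by
  refine ⟨Sum.elim u (lam • u), ?_, ?_⟩
  · intro h
    exact hu (funext fun i => congrFun h (Sum.inl i))
  · rw [fromBlocks_mulVec]
    funext i
    cases i with
    | inl i =>
      simp [zero_mulVec, one_mulVec]
    | inr i =>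
      have hW2 : (W * W).mulVec u = μ • μ • u := by
        rw [← Matrix.mulVec_mulVec, hWu, Matrix.mulVec_smul, hWu]
      simp only [Sum.elim_comp_inl, Sum.elim_comp_inr, smul_mulVec, hW2,
        Matrix.mulVec_smul, hWu, Pi.add_apply, Pi.smul_apply, Sum.elim_inr, smul_eq_mul]
      linear_combination (-(u i)) * hrel


lemma fjmm_aux_real (σ β₀ : ℝ) (hσ : σ ∈ Set.Ioo (0:ℝ) 1) (hβ : β₀ ∈ Set.Ioo (0:ℝ) 1)
    (lam : ℂ) (hlam : lam.im = 0) (μ : ℂ)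
    (hrel : lam ^ 2 = ((σ * (1 - β₀) : ℝ) : ℂ) * μ * lam + ((σ * β₀ : ℝ) : ℂ) * μ ^ 2) :
    μ.im = 0 := by
  by_contra hb
  have him := congrArg Complex.im hrel
  have hre := congrArg Complex.re hrel
  simp only [pow_two, Complex.mul_im, Complex.mul_re, Complex.add_im, Complex.add_re,
    Complex.ofReal_re, Complex.ofReal_im, hlam] at him hre
  have hσβ : 0 < σ * β₀ := mul_pos hσ.1 hβ.1
  have hb2 : 0 < μ.im ^ 2 := by positivity
  have hfac : σ * (1 - β₀) * lam.re + 2 * (σ * β₀) * μ.re = 0 := by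
    rcases mul_eq_zero.mp (show μ.im * (σ * (1 - β₀) * lam.re + 2 * (σ * β₀) * μ.re) = 0 by
      linear_combination -him) with h | h
    · exact absurd h hb
    · exact h
  have h3 : (σ * (1 - β₀) * lam.re + 2 * (σ * β₀) * μ.re) * μ.re = 0 := by
    rw [hfac, zero_mul]
  nlinarith [sq_nonneg lam.re, sq_nonneg μ.re, mul_pos hσβ hb2, hre, h3]

end fjmmAux

/-- **Eigenvalue relation for the secondary-neighbors block matrix (proof of Proposition 4).**
For an `n×n` complex matrix `W` and reals `σ, β₀`, and
`Ā_d = [[0, I], [σβ₀W², σ(1-β₀)W]]`: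
a complex `lam` is an eigenvalue of `Ā_d` iff there is an eigenvalue `μ` of `W` with
`lam² = σ(1-β₀)μ·lam + σβ₀μ²`.  Moreover, if `W` is row-stochastic (real nonnegative
entries, rows summing to `1`), `σ ∈ (0,1)`, `β₀ ∈ (0,1)` and `lam` is real, then every
eigenvalue `μ` of `W` satisfying this relation is necessarily real. -/

theorem fjmm_secondary_neighbors_eigenvalue_relation
    (n : ℕ) (W : Matrix (Fin n) (Fin n) ℂ) (σ β₀ : ℝ) :
    (∀ lam : ℂ,
      (∃ v : Fin n ⊕ Fin n → ℂ, v ≠ 0 ∧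
        (Matrix.fromBlocks (0 : Matrix (Fin n) (Fin n) ℂ) (1 : Matrix (Fin n) (Fin n) ℂ)
          (((σ * β₀ : ℝ) : ℂ) • (W * W)) (((σ * (1 - β₀) : ℝ) : ℂ) • W)).mulVec v
          = lam • v) ↔
      (∃ μ : ℂ, (∃ u : Fin n → ℂ, u ≠ 0 ∧ W.mulVec u = μ • u) ∧
        lam ^ 2 = ((σ * (1 - β₀) : ℝ) : ℂ) * μ * lam + ((σ * β₀ : ℝ) : ℂ) * μ ^ 2))
    ∧
    ((∀ i j, (W i j).im = 0 ∧ 0 ≤ (W i j).re) → (∀ i, ∑ j, W i j = 1) →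
      σ ∈ Set.Ioo (0:ℝ) 1 → β₀ ∈ Set.Ioo (0:ℝ) 1 →
      ∀ lam : ℂ, lam.im = 0 →
      ∀ μ : ℂ, (∃ u : Fin n → ℂ, u ≠ 0 ∧ W.mulVec u = μ • u) →
        lam ^ 2 = ((σ * (1 - β₀) : ℝ) : ℂ) * μ * lam + ((σ * β₀ : ℝ) : ℂ) * μ ^ 2 →
        μ.im = 0) := by
  constructor
  · intro lam
    constructor
    · rintro ⟨v, hv, hmul⟩
      exact fjmm_aux_forward n W _ _ lam v hv hmul
    · rintro ⟨μ, ⟨u, hu, hWu⟩, hrel⟩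
      exact fjmm_aux_backward n W _ _ lam μ u hu hWu hrel
  · intro _ _ hσ hβ lam hlam μ _ hrel
    exact fjmm_aux_real σ β₀ hσ hβ lam hlam μ hrel
end

section
/- Let W be an n×n matrix, σ ∈ (0,1), β₀ ∈ (0,1), and α₁, α₂ ≥ 0 with α₁+α₂ = 1. Consider the 2n×2n block matrix Ā_d = [[0, I],[σβ₀(α₁W + α₂I), σ(1−β₀) W]]. A complex number λ is an eigenvalue of Ā_d if and only if there exists an eigenvalue μ of W such that λ² − σβ₀α₂ = ( σ(1−β₀)λ + σβ₀α₁ ) μ. Moreover, for any real eigenvalue λ ≥ 0 of Ā_d, the quantity σ(1−β₀)λ + σβ₀α₁ is strictly positive. -/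
open Matrix

/-- **Eigenvalue relation for the inertia/memory-mixture block matrix (proof of
Proposition 3).**  For `σ ∈ (0,1)`, `β₀ ∈ (0,1)`, `α₁, α₂ ≥ 0` with `α₁+α₂ = 1`,
and `Ā_d = [[0, I], [σβ₀(α₁W + α₂I), σ(1-β₀)W]]` (a real `n×n` matrix `W`, eigenvalues
over `ℂ`): a complex `lam` is an eigenvalue of `Ā_d` iff there is an eigenvalue `μ` of
`W` with `lam² - σβ₀α₂ = (σ(1-β₀)lam + σβ₀α₁)·μ`.  Moreover, for any real eigenvalue
`lam ≥ 0` of `Ā_d`, the quantity `σ(1-β₀)lam + σβ₀α₁` is strictly positive. -/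
theorem fjmm_inertia_memory_eigenvalue_relation
    (n : ℕ) (W : Matrix (Fin n) (Fin n) ℝ) (σ β₀ α₁ α₂ : ℝ)
    (hσ : σ ∈ Set.Ioo (0:ℝ) 1) (hβ : β₀ ∈ Set.Ioo (0:ℝ) 1)
    (hα₁ : 0 ≤ α₁) (hα₂ : 0 ≤ α₂) (hα : α₁ + α₂ = 1) :
    (∀ lam : ℂ,
      (∃ v : Fin n ⊕ Fin n → ℂ, v ≠ 0 ∧
        ((Matrix.fromBlocks (0 : Matrix (Fin n) (Fin n) ℝ) (1 : Matrix (Fin n) (Fin n) ℝ)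
            ((σ * β₀) • (α₁ • W + α₂ • (1 : Matrix (Fin n) (Fin n) ℝ)))
            ((σ * (1 - β₀)) • W)).map Complex.ofReal).mulVec v = lam • v) ↔
      (∃ μ : ℂ, (∃ u : Fin n → ℂ, u ≠ 0 ∧ (W.map Complex.ofReal).mulVec u = μ • u) ∧
        lam ^ 2 - ((σ * β₀ * α₂ : ℝ) : ℂ) =
          (((σ * (1 - β₀) : ℝ) : ℂ) * lam + ((σ * β₀ * α₁ : ℝ) : ℂ)) * μ))
    ∧
    (∀ lam : ℝ, 0 ≤ lam →
      (∃ v : Fin n ⊕ Fin n → ℂ, v ≠ 0 ∧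
        ((Matrix.fromBlocks (0 : Matrix (Fin n) (Fin n) ℝ) (1 : Matrix (Fin n) (Fin n) ℝ)
            ((σ * β₀) • (α₁ • W + α₂ • (1 : Matrix (Fin n) (Fin n) ℝ)))
            ((σ * (1 - β₀)) • W)).map Complex.ofReal).mulVec v = (lam : ℂ) • v) →
      0 < σ * (1 - β₀) * lam + σ * β₀ * α₁) := by
  obtain ⟨hσ0, hσ1⟩ := hσ
  obtain ⟨hβ0, hβ1⟩ := hβ
  set a₁ : ℂ := ((σ * β₀ * α₁ : ℝ) : ℂ) with ha₁
  set a₂ : ℂ := ((σ * β₀ * α₂ : ℝ) : ℂ) with ha₂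
  set b : ℂ := ((σ * (1 - β₀) : ℝ) : ℂ) with hb
  set Wc := W.map (Complex.ofReal) with hWc
  have hblock : (Matrix.fromBlocks (0 : Matrix (Fin n) (Fin n) ℝ) (1 : Matrix (Fin n) (Fin n) ℝ)
      ((σ * β₀) • (α₁ • W + α₂ • (1 : Matrix (Fin n) (Fin n) ℝ)))
      ((σ * (1 - β₀)) • W)).map Complex.ofReal
      = Matrix.fromBlocks 0 1 (a₁ • Wc + a₂ • 1) (b • Wc) := by
    ext i j
    rcases i with i | i <;> rcases j with j | j <;>
      simp [Matrix.map_apply, Matrix.one_apply, ha₁, ha₂, hb, hWc] <;>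
      split_ifs <;> push_cast <;> ring
  -- main equivalence
  have main : ∀ lam : ℂ,
      (∃ v : Fin n ⊕ Fin n → ℂ, v ≠ 0 ∧
        ((Matrix.fromBlocks (0 : Matrix (Fin n) (Fin n) ℝ) (1 : Matrix (Fin n) (Fin n) ℝ)
            ((σ * β₀) • (α₁ • W + α₂ • (1 : Matrix (Fin n) (Fin n) ℝ)))
            ((σ * (1 - β₀)) • W)).map Complex.ofReal).mulVec v = lam • v) ↔
      (∃ μ : ℂ, (∃ u : Fin n → ℂ, u ≠ 0 ∧ Wc.mulVec u = μ • u) ∧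
        lam ^ 2 - a₂ = (b * lam + a₁) * μ) := by
    intro lam
    rw [hblock]
    constructor
    · rintro ⟨v, hv0, hv⟩
      set x : Fin n → ℂ := fun i => v (Sum.inl i) with hx
      set y : Fin n → ℂ := fun i => v (Sum.inr i) with hy
      have hvelim : v = Sum.elim x y := by
        funext i; rcases i with i | i <;> rfl
      rw [hvelim, Matrix.fromBlocks_mulVec] at hv
      have h1 : ∀ i, y i = lam * x i := by
        intro i
        have := congrFun hv (Sum.inl i)
        simpa using this
      have hyx : y = lam • x := by funext i; simpa using h1 i
      have h2 : (a₁ • Wc + a₂ • 1).mulVec x + (b • Wc).mulVec y = lam • y := by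
        funext i
        have := congrFun hv (Sum.inr i)
        simpa using this
      have hx0 : x ≠ 0 := by
        intro h
        apply hv0
        funext i
        rcases i with i | i
        · exact congrFun h i
        · have h' := h1 i
          rw [h] at h'
          simp only [Pi.zero_apply, mul_zero] at h'
          exact h'
      -- derive scalar equation
      have hkey : (b * lam + a₁) • Wc.mulVec x = (lam ^ 2 - a₂) • x := by
        have h2' : a₁ • Wc.mulVec x + a₂ • x + (b * lam) • Wc.mulVec x
            = (lam ^ 2) • x := by
          have := h2
          rw [hyx] at this
          rw [Matrix.add_mulVec, Matrix.smul_mulVec, Matrix.smul_mulVec,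
            Matrix.smul_mulVec, Matrix.one_mulVec, Matrix.mulVec_smul] at this
          rw [smul_smul] at this
          convert this using 1
          rw [smul_smul]
          ring_nf
        funext i
        have := congrFun h2' i
        simp only [Pi.add_apply, Pi.smul_apply, smul_eq_mul] at this ⊢
        ring_nf
        ring_nf at this
        linear_combination this
      by_cases hc : b * lam + a₁ = 0
      · -- degenerate case
        rw [hc, zero_smul] at hkey
        have hl2 : lam ^ 2 - a₂ = 0 := by
          by_contra h
          apply hx0
          funext i
          have := congrFun hkey i
          simp only [Pi.smul_apply, Pi.zero_apply, smul_eq_mul] at this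
          have := (mul_eq_zero.mp this.symm).resolve_left h
          simpa using this
        have hn : 0 < n := by
          rcases Function.ne_iff.mp hx0 with ⟨i, _⟩
          exact i.pos
        haveI : NeZero n := ⟨hn.ne'⟩
        -- W has an eigenvalue over ℂ
        obtain ⟨μ, hμ⟩ := Module.End.exists_eigenvalue (Matrix.mulVecLin Wc)
        obtain ⟨u, hu⟩ := hμ.exists_hasEigenvector
        refine ⟨μ, ⟨u, hu.2, ?_⟩, by rw [hl2, hc, zero_mul]⟩
        have := hu.1
        simpa [Module.End.mem_eigenspace_iff] using hu.apply_eq_smul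
      · refine ⟨(lam ^ 2 - a₂) / (b * lam + a₁), ⟨x, hx0, ?_⟩, by rw [mul_div_assoc']; exact (mul_div_cancel_left₀ _ hc).symm⟩
        funext i
        have := congrFun hkey i
        simp only [Pi.smul_apply, smul_eq_mul] at this ⊢
        rw [div_mul_eq_mul_div, eq_div_iff hc]
        linear_combination this
    · rintro ⟨μ, ⟨u, hu0, hu⟩, hrel⟩
      refine ⟨Sum.elim u (lam • u), ?_, ?_⟩
      · intro h
        apply hu0
        funext i
        exact congrFun h (Sum.inl i)
      · rw [Matrix.fromBlocks_mulVec]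
        simp only [Sum.elim_comp_inl, Sum.elim_comp_inr]
        have hbot : (a₁ • Wc + a₂ • 1) *ᵥ u + (b • Wc) *ᵥ (lam • u) = lam • (lam • u) := by
          simp only [Matrix.add_mulVec, Matrix.mulVec_smul, Matrix.smul_mulVec,
            Matrix.one_mulVec, hu]
          funext i
          simp only [Pi.add_apply, Pi.smul_apply, smul_eq_mul]
          linear_combination (-(u i)) * hrel
        rw [Matrix.zero_mulVec, Matrix.one_mulVec, zero_add, hbot]
        funext i
        rcases i with i | i <;> simp
  refine ⟨main, ?_⟩
  intro lam hlam hev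
  obtain ⟨μ, ⟨u, hu0, hu⟩, hrel⟩ := (main (lam : ℂ)).mp hev
  by_contra hcon
  push_neg at hcon
  have h1 : 0 ≤ σ * (1 - β₀) * lam := by
    apply mul_nonneg (mul_nonneg hσ0.le (by linarith)) hlam
  have h2 : 0 ≤ σ * β₀ * α₁ := by positivity
  have hl1 : σ * (1 - β₀) * lam = 0 := by linarith
  have hl2 : σ * β₀ * α₁ = 0 := by linarith
  have hpos1 : 0 < σ * (1 - β₀) := by nlinarith
  have hpos2 : 0 < σ * β₀ := by positivity
  have hlam0 : lam = 0 := by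
    rcases mul_eq_zero.mp hl1 with h | h
    · exact absurd h hpos1.ne'
    · exact h
  have ha10 : α₁ = 0 := by
    rcases mul_eq_zero.mp hl2 with h | h
    · exact absurd h hpos2.ne'
    · exact h
  have ha21 : α₂ = 1 := by linarith
  rw [ha₁, ha₂, hb, hlam0, ha10, ha21] at hrel
  push_cast at hrel
  simp only [mul_zero, zero_mul, add_zero, zero_add, zero_pow, ne_eq] at hrel
  have : (σ * β₀ : ℝ) = 0 := by
    have h0 : ((σ * β₀ : ℝ) : ℂ) = 0 := by
      push_cast
      linear_combination -hrel
    exact_mod_cast h0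
  nlinarith
end
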